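/- arXiv:1008.2417 — 7 statements merged into one kernel-verified Lean document; each statement's English description precedes it below -/
import Mathlib

section
/- Let D be a positive definite diagonal matrix with eigenvalues λ₁,...,λₙ and f : ℝ⁺ → ℝ⁺ continuous. The identity ⟨A, J_D^f B⟩ = ⟨B*, J_D^f A*⟩ holds for all A, B ∈ M_n (for every such D) if and only if f satisfies x f(1/x) = f(x) for all x > 0. -/
open Matrix

/-- The identity `⟨A, J_D^f B⟩ = ⟨B*, J_D^f A*⟩` holds for all matrices `A, B`
and all positive definite diagonal `D` (of every size) if and only if `x f(1/x) = f(x)`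
for all `x > 0`.  Here `(J_D^f B)_{ij} = λ_j f(λ_i/λ_j) B_{ij}` and `⟨A,B⟩ = Tr A* B`. -/
theorem stmt2 (f : ℝ → ℝ) (hfpos : ∀ x > 0, 0 < f x) (hfcont : ContinuousOn f (Set.Ioi 0)) :
    (∀ (n : ℕ) (lam : Fin n → ℝ), (∀ i, 0 < lam i) →
      ∀ A B : Matrix (Fin n) (Fin n) ℂ,
        (Aᴴ * Matrix.of fun i j => ((lam j * f (lam i / lam j) : ℝ) : ℂ) * B i j).trace =
        ((Bᴴ)ᴴ * Matrix.of fun i j =>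
          ((lam j * f (lam i / lam j) : ℝ) : ℂ) * (Aᴴ) i j).trace)
    ↔ (∀ x > (0 : ℝ), x * f (1 / x) = f x) := by
  constructor
  · intro h x hx
    have h2 := h 2 ![x, 1] (by
      intro i
      fin_cases i <;> simp [hx]) (Matrix.single 0 1 1) (Matrix.single 0 1 1)
    simp [Matrix.trace, Matrix.mul_apply, Matrix.single, Matrix.conjTranspose_apply,
      Fin.sum_univ_two, Matrix.diag] at h2
    have hre : f x = x * f x⁻¹ := by exact_mod_cast h2
    rw [one_div]
    linarith
  · intro hf n lam hlam A B
    have hc : ∀ i j, lam j * f (lam i / lam j) = lam i * f (lam j / lam i) := by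
      intro i j
      have hx : 0 < lam i / lam j := div_pos (hlam i) (hlam j)
      have := hf _ hx
      rw [one_div, inv_div] at this
      have hj := (hlam j).ne'
      field_simp at this ⊢
      linarith [this]
    simp only [Matrix.trace, Matrix.diag, Matrix.mul_apply, Matrix.of_apply,
      Matrix.conjTranspose_apply, Matrix.conjTranspose_conjTranspose]
    rw [Finset.sum_comm]
    apply Finset.sum_congr rfl
    intro i _
    apply Finset.sum_congr rfl
    intro k _
    rw [hc k i]
    ring
end

section
/- Let D be a positive definite matrix. The solution B to the equation (DX + XD)/2 = B is given by X = ∫₀^∞ exp(−tD/2) B exp(−tD/2) dt; that is, the inverse of the map J_D : X ↦ (DX+XD)/2 is B ↦ ∫₀^∞ e^{−tD/2} B e^{−tD/2} dt. -/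
/-!
Conjugating by the unitary `U` that diagonalizes `D = U diag(λ) U*` turns `J_D` into Schur
(entrywise) multiplication by `(λ_i + λ_j) / 2`, and turns `e^{-tD/2} · e^{-tD/2}` into Schur
multiplication by `e^{-t(λ_i + λ_j)/2}`, whose integral over `(0, ∞)` is
`((λ_i + λ_j) / 2)⁻¹`. Since all `λ_i > 0`, the two Schur multipliers are mutually inverse.
-/

open Matrix
open scoped ComplexOrder

/-- `f` applied to a Hermitian matrix via the spectral theorem. -/
noncomputable def hermApply {n : ℕ} (f : ℝ → ℝ) (A : Matrix (Fin n) (Fin n) ℂ)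
    (hA : A.IsHermitian) : Matrix (Fin n) (Fin n) ℂ :=
  (hA.eigenvectorUnitary : Matrix (Fin n) (Fin n) ℂ) *
    Matrix.diagonal (fun i => ((f (hA.eigenvalues i) : ℝ) : ℂ)) *
    (star hA.eigenvectorUnitary : Matrix (Fin n) (Fin n) ℂ)

open MeasureTheory Unitary

theorem integral_exp_neg_mul_Ioi_zero {c : ℝ} (hc : 0 < c) :
    ∫ t in Set.Ioi 0, Real.exp (-c * t) = c⁻¹ := by
  have h := integral_exp_mul_Ioi (neg_neg_of_pos hc) 0
  simp only [mul_zero, Real.exp_zero] at h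
  rw [h, neg_div_neg_eq, one_div]

namespace Matrix

variable {l m n o : Type*} [Fintype m] [Fintype n]

theorem integral_mul_mul_apply {𝕜 X : Type*} [RCLike 𝕜] [MeasurableSpace X] {μ : Measure X}
    (A : Matrix l m 𝕜) (N : X → Matrix m n 𝕜) (C : Matrix n o 𝕜)
    (hN : ∀ p q, Integrable (fun x => N x p q) μ) (i : l) (j : o) :
    ∫ x, (A * N x * C) i j ∂μ = (A * of (fun p q => ∫ x, N x p q ∂μ) * C) i j := by
  simp only [mul_apply, of_apply, Finset.sum_mul]
  rw [integral_finsetSum _ fun p _ => integrable_finsetSum _ fun q _ =>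
    ((hN q p).const_mul _).mul_const _]
  refine Finset.sum_congr rfl fun p _ => ?_
  rw [integral_finsetSum _ fun q _ => ((hN q p).const_mul _).mul_const _]
  simp only [integral_mul_const, integral_const_mul]

variable {α : Type*} [CommSemiring α] [DecidableEq n]

theorem diagonal_mul_add_mul_diagonal (d : n → α) (M : Matrix n n α) :
    diagonal d * M + M * diagonal d = of (fun i j => d i + d j) ⊙ M := by
  ext i j
  simp only [add_apply, diagonal_mul, mul_diagonal, hadamard_apply, of_apply]
  ring

theorem diagonal_mul_mul_diagonal (d : n → α) (M : Matrix n n α) :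
    diagonal d * M * diagonal d = of (fun i j => d i * d j) ⊙ M := by
  ext i j
  simp only [diagonal_mul, mul_diagonal, hadamard_apply, of_apply]
  ring

namespace IsHermitian

variable {A : Matrix n n ℂ} (hA : A.IsHermitian)

theorem mul_conjStarAlgAut_add_conjStarAlgAut_mul (M : Matrix n n ℂ) :
    A * conjStarAlgAut ℂ _ hA.eigenvectorUnitary M +
        conjStarAlgAut ℂ _ hA.eigenvectorUnitary M * A =
      conjStarAlgAut ℂ _ hA.eigenvectorUnitary
        (of (fun i j => (hA.eigenvalues i + hA.eigenvalues j : ℂ)) ⊙ M) := by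
  have hspec := hA.spectral_theorem
  -- hide `hA` inside `Φ`, so that `A` can be rewritten in the goal
  set Φ := conjStarAlgAut ℂ _ hA.eigenvectorUnitary
  conv_lhs => rw [hspec]
  rw [← map_mul, ← map_mul, ← map_add, diagonal_mul_add_mul_diagonal]
  rfl

end IsHermitian

end Matrix

section ExpWeight

variable {ι : Type*} {d : ι → ℝ} (M : Matrix ι ι ℂ) (p q : ι)

theorem of_exp_mul_exp_hadamard_apply (t : ℝ) :
    (of (fun p q => (Real.exp (-(t * d p) / 2) : ℂ) * Real.exp (-(t * d q) / 2)) ⊙ M) p q =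
      Real.exp (-((d p + d q) / 2) * t) * M p q := by
  rw [hadamard_apply, of_apply, ← Complex.ofReal_mul, ← Real.exp_add]
  ring_nf

theorem integrableOn_of_exp_mul_exp_hadamard_apply (hd : ∀ i, 0 < d i) :
    IntegrableOn (fun t : ℝ =>
      (of (fun p q => (Real.exp (-(t * d p) / 2) : ℂ) * Real.exp (-(t * d q) / 2)) ⊙ M) p q)
      (Set.Ioi 0) := by
  simp only [of_exp_mul_exp_hadamard_apply]
  exact (exp_neg_integrableOn_Ioi 0 (half_pos (add_pos (hd p) (hd q)))).ofReal.mul_const _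

theorem integral_of_exp_mul_exp_hadamard_apply (hd : ∀ i, 0 < d i) :
    ∫ t in Set.Ioi (0 : ℝ),
      (of (fun p q => (Real.exp (-(t * d p) / 2) : ℂ) * Real.exp (-(t * d q) / 2)) ⊙ M) p q =
      ((d p + d q : ℂ) / 2)⁻¹ * M p q := by
  simp only [of_exp_mul_exp_hadamard_apply]
  rw [integral_mul_const, integral_complex_ofReal,
    integral_exp_neg_mul_Ioi_zero (half_pos (add_pos (hd p) (hd q)))]
  push_cast
  rfl

end ExpWeight

theorem hermApply_eq_conjStarAlgAut {n : ℕ} (f : ℝ → ℝ) {A : Matrix (Fin n) (Fin n) ℂ}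
    (hA : A.IsHermitian) :
    hermApply f A hA = conjStarAlgAut ℂ _ hA.eigenvectorUnitary
      (diagonal fun i => (f (hA.eigenvalues i) : ℂ)) := rfl

theorem integral_hermApply_exp_mul_conjStarAlgAut_mul_apply {n : ℕ}
    {A : Matrix (Fin n) (Fin n) ℂ} (hA : A.PosDef) (M : Matrix (Fin n) (Fin n) ℂ)
    (i j : Fin n) :
    ∫ t in Set.Ioi (0 : ℝ), (hermApply (fun x => Real.exp (-(t * x) / 2)) A hA.1 *
        conjStarAlgAut ℂ _ hA.1.eigenvectorUnitary M *
        hermApply (fun x => Real.exp (-(t * x) / 2)) A hA.1) i j =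
      conjStarAlgAut ℂ _ hA.1.eigenvectorUnitary
        (of (fun p q => ((hA.1.eigenvalues p + hA.1.eigenvalues q : ℂ) / 2)⁻¹) ⊙ M) i j := by
  simp only [hermApply_eq_conjStarAlgAut, ← map_mul]
  simp only [diagonal_mul_mul_diagonal, conjStarAlgAut_apply]
  rw [integral_mul_mul_apply _ _ _
    (integrableOn_of_exp_mul_exp_hadamard_apply M · · hA.eigenvalues_pos)]
  simp only [integral_of_exp_mul_exp_hadamard_apply M _ _ hA.eigenvalues_pos]
  rfl

/-- for a positive definite `D`, the inverse of the map
`J_D : X ↦ (DX + XD)/2` is `B ↦ ∫₀^∞ e^{-tD/2} B e^{-tD/2} dt`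
(the integral being taken entrywise). -/
theorem stmt4 {n : ℕ} (D : Matrix (Fin n) (Fin n) ℂ) (hD : D.PosDef)
    (JD K : Matrix (Fin n) (Fin n) ℂ → Matrix (Fin n) (Fin n) ℂ)
    (hJD : ∀ X, JD X = (1 / 2 : ℂ) • (D * X + X * D))
    (hK : ∀ B, K B = Matrix.of fun i j => ∫ t in Set.Ioi (0 : ℝ),
      (hermApply (fun x => Real.exp (-(t * x) / 2)) D hD.1 * B *
        hermApply (fun x => Real.exp (-(t * x) / 2)) D hD.1) i j) :
    ∀ B, JD (K B) = B ∧ K (JD B) = B := by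
  set Φ := conjStarAlgAut ℂ _ hD.1.eigenvectorUnitary
  set w : Fin n → Fin n → ℂ := fun i j => (hD.1.eigenvalues i + hD.1.eigenvalues j : ℂ) / 2
  have hJΦ : ∀ M, JD (Φ M) = Φ (of w ⊙ M) := fun M => by
    rw [hJD, hD.1.mul_conjStarAlgAut_add_conjStarAlgAut_mul, ← map_smul, ← smul_hadamard]
    congr 2
    ext i j
    simp only [w, Matrix.smul_apply, of_apply, smul_eq_mul]
    ring
  have hKΦ : ∀ M, K (Φ M) = Φ (of (fun i j => (w i j)⁻¹) ⊙ M) := fun M => by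
    ext i j
    rw [hK, of_apply, integral_hermApply_exp_mul_conjStarAlgAut_mul_apply hD]
  have hw_ne : ∀ i j, w i j ≠ 0 := fun i j => by
    have := add_pos (hD.eigenvalues_pos i) (hD.eigenvalues_pos j)
    simp only [w]
    exact_mod_cast (half_pos this).ne'
  have hw_mul_inv : of w ⊙ of (fun i j => (w i j)⁻¹) = of 1 := by
    ext i j
    exact mul_inv_cancel₀ (hw_ne i j)
  intro B
  obtain ⟨M, rfl⟩ : ∃ M, Φ M = B := ⟨Φ.symm B, Φ.apply_symm_apply B⟩
  refine ⟨?_, ?_⟩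
  · rw [hKΦ, hJΦ, ← hadamard_assoc, hw_mul_inv, of_one_hadamard]
  · rw [hJΦ, hKΦ, ← hadamard_assoc, hadamard_comm (of _), hw_mul_inv, of_one_hadamard]
end

section
/- Let D be a positive definite density matrix (D > 0, Tr D = 1), and let B = B* with Tr B = 0. For any finite collection of positive semidefinite matrices {E_i} with Σᵢ Eᵢ = I, one has Σᵢ (Tr B Eᵢ)² / (Tr D Eᵢ) ≤ Tr B J_D⁻¹(B), where J_D(C) = (DC + CD)/2. -/
/-!
Replacing `C` by its Hermitian part changes neither the equation `J_D(C) = B` nor `Re Tr(B C)`,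
so `C` may be taken Hermitian. For each `Eᵢ` and real `t`, the matrix `(C - t) D (C - t)` is
positive semidefinite, hence
`0 ≤ Tr((C - t) D (C - t) Eᵢ) = Tr(C D C Eᵢ) - 2 t Tr(B Eᵢ) + t² Tr(D Eᵢ)`,
and the discriminant of this quadratic gives `(Tr B Eᵢ)² / Tr(D Eᵢ) ≤ Tr(C D C Eᵢ)`.
Summing over `i` with `∑ Eᵢ = 1` leaves `Tr(C D C) = Tr(B C)`.
-/

open Matrix
open scoped ComplexOrder MatrixOrder

lemma sq_div_le_of_forall_quadratic_nonneg {a b c : ℝ} (ha : 0 ≤ a)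
    (h : ∀ t, 0 ≤ a * (t * t) - 2 * b * t + c) : b ^ 2 / a ≤ c := by
  have hdisc := discrim_le_zero (a := a) (b := -2 * b) (c := c) fun t => by linarith [h t]
  have hc : 0 ≤ c := by simpa using h 0
  refine div_le_of_le_mul₀ ha hc ?_
  rw [discrim] at hdisc
  nlinarith

namespace Matrix

open RCLike

variable {n 𝕜 : Type*} [Fintype n] [RCLike 𝕜]

lemma PosSemidef.trace_mul_nonneg {A B : Matrix n n 𝕜} (hA : A.PosSemidef) (hB : B.PosSemidef) :
    0 ≤ (A * B).trace := by
  classical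
  obtain ⟨Y, rfl⟩ := CStarAlgebra.nonneg_iff_eq_star_mul_self.mp hB.nonneg
  rw [star_eq_conjTranspose, ← Matrix.mul_assoc, trace_mul_comm]
  simpa only [Matrix.mul_assoc] using (hA.mul_mul_conjTranspose_same Y).trace_nonneg

lemma trace_symmetrized_mul (D C : Matrix n n 𝕜) :
    ((1 / 2 : 𝕜) • (D * C + C * D) * C).trace = (C * D * C).trace := by
  rw [smul_mul, trace_smul, add_mul, trace_add, trace_mul_cycle, Matrix.mul_assoc]
  simp only [smul_eq_mul]
  ring

lemma exists_isHermitian_symmetrized_eq {D B C : Matrix n n 𝕜} (hD : D.IsHermitian)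
    (hB : B.IsHermitian) (hC : (1 / 2 : 𝕜) • (D * C + C * D) = B) :
    ∃ H : Matrix n n 𝕜, H.IsHermitian ∧ (1 / 2 : 𝕜) • (D * H + H * D) = B ∧
      re (B * H).trace = re (B * C).trace := by
  have hCstar : (1 / 2 : 𝕜) • (D * Cᴴ + Cᴴ * D) = B := by
    simpa [hD.eq, hB.eq, add_comm] using congrArg conjTranspose hC
  refine ⟨(1 / 2 : 𝕜) • (C + Cᴴ), ?_, ?_, ?_⟩
  · simp [IsHermitian, add_comm]
  · calc (1 / 2 : 𝕜) • (D * ((1 / 2 : 𝕜) • (C + Cᴴ)) + (1 / 2 : 𝕜) • (C + Cᴴ) * D)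
        = (1 / 2 : 𝕜) • ((1 / 2 : 𝕜) • (D * C + C * D) + (1 / 2 : 𝕜) • (D * Cᴴ + Cᴴ * D)) := by
          simp only [mul_smul_comm, smul_mul, mul_add, add_mul]
          module
      _ = B := by rw [hC, hCstar]; module
  · have hconj : (B * Cᴴ).trace = star (B * C).trace := by
      rw [← trace_conjTranspose, conjTranspose_mul, hB.eq, trace_mul_comm]
    rw [Matrix.mul_smul, trace_smul, mul_add, trace_add, hconj, star_def, add_conj, smul_eq_mul,
      one_div, inv_mul_cancel_left₀ two_ne_zero, ofReal_re]

variable [DecidableEq n]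

lemma sq_re_trace_div_le {D E C B : Matrix n n 𝕜} (hD : D.PosSemidef)
    (hE : E.PosSemidef) (hC : C.IsHermitian) (hB : (1 / 2 : 𝕜) • (D * C + C * D) = B) :
    re (B * E).trace ^ 2 / re (D * E).trace ≤ re (C * D * C * E).trace := by
  have re_trace_nonneg {P : Matrix n n 𝕜} (hP : P.PosSemidef) : 0 ≤ re (P * E).trace :=
    (nonneg_iff.mp (hP.trace_mul_nonneg hE)).1
  refine sq_div_le_of_forall_quadratic_nonneg (re_trace_nonneg hD) fun t => ?_
  set M := C - (t : 𝕜) • 1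
  have hM : Mᴴ = M := by simp [M, hC.eq]
  have hexp : M * D * M = C * D * C - (2 * t : 𝕜) • B + ((t : 𝕜) * t) • D := by
    rw [← hB, smul_smul]
    simp only [M, sub_mul, mul_sub, smul_mul, mul_smul_comm, Matrix.one_mul, Matrix.mul_one,
      smul_add]
    module
  have hquad := re_trace_nonneg (hD.conjTranspose_mul_mul_same M)
  rw [hM, hexp] at hquad
  simp only [add_mul, sub_mul, trace_add, trace_sub, smul_mul, trace_smul, smul_eq_mul, map_add,
    map_sub, mul_re, ofNat_re, ofReal_re, ofNat_im, ofReal_im, mul_zero, sub_zero, mul_im,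
    zero_mul, add_zero] at hquad
  linarith

end Matrix

theorem stmt6_general {n : ℕ} (D : Matrix (Fin n) (Fin n) ℂ) (hD : D.PosDef)
    (B : Matrix (Fin n) (Fin n) ℂ) (hB : B.IsHermitian)
    (C : Matrix (Fin n) (Fin n) ℂ) (hC : (1 / 2 : ℂ) • (D * C + C * D) = B)
    (k : ℕ) (E : Fin k → Matrix (Fin n) (Fin n) ℂ)
    (hE : ∀ i, (E i).PosSemidef) (hEsum : ∑ i, E i = 1) :
    ∑ i, ((B * E i).trace.re) ^ 2 / ((D * E i).trace.re) ≤ (B * C).trace.re := by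
  obtain ⟨H, hH, hHB, hBH⟩ := exists_isHermitian_symmetrized_eq hD.isHermitian hB hC
  calc ∑ i, ((B * E i).trace.re) ^ 2 / ((D * E i).trace.re)
      ≤ ∑ i, (H * D * H * E i).trace.re :=
        Finset.sum_le_sum fun i _ => sq_re_trace_div_le hD.posSemidef (hE i) hH hHB
    _ = (H * D * H).trace.re := by
      rw [← Complex.re_sum, ← trace_sum, ← Finset.mul_sum, hEsum, mul_one]
    _ = (B * H).trace.re := by rw [← hHB, trace_symmetrized_mul]
    _ = (B * C).trace.re := hBH

/-- for a positive definite density matrix `D`, traceless Hermitian `B`,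
and any POVM `{Eᵢ}`, the classical Fisher information `Σᵢ (Tr B Eᵢ)²/(Tr D Eᵢ)` is
bounded by `Tr B J_D⁻¹(B)`, where `J_D(C) = (DC + CD)/2` (so `C = J_D⁻¹(B)` satisfies
`(DC + CD)/2 = B` and `Tr B J_D⁻¹(B) = Tr (B C)`). -/
theorem stmt6 {n : ℕ} (D : Matrix (Fin n) (Fin n) ℂ) (hD : D.PosDef) (hDtr : D.trace = 1)
    (B : Matrix (Fin n) (Fin n) ℂ) (hB : B.IsHermitian) (hBtr : B.trace = 0)
    (C : Matrix (Fin n) (Fin n) ℂ) (hC : (1 / 2 : ℂ) • (D * C + C * D) = B)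
    (k : ℕ) (E : Fin k → Matrix (Fin n) (Fin n) ℂ)
    (hE : ∀ i, (E i).PosSemidef) (hEsum : ∑ i, E i = 1) :
    ∑ i, ((B * E i).trace.re) ^ 2 / ((D * E i).trace.re) ≤ (B * C).trace.re :=
  stmt6_general D hD B hB C hC k E hE hEsum
end

section
/- Let D be a positive definite density matrix, B = B* with Tr B = 0, and C = J_D⁻¹(B) where J_D(X) = (DX+XD)/2. Then the supremum over all POVMs {Eᵢ} of the classical Fisher information Σᵢ (Tr B Eᵢ)²/(Tr D Eᵢ) equals Tr B J_D⁻¹(B) = Tr D C², and is attained by the spectral projections of C. -/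
open Matrix
open scoped ComplexOrder

/-!
Fix a POVM element `E` and write `D = Sᴴ S`. Cauchy–Schwarz for the semi-inner product
`⟪X, Y⟫ = Tr (Y E Xᴴ)`, applied to `S` and `S C`, gives
`(Re Tr (D C E))² ≤ Tr (D E) · Tr (C D C E)`. Once `C` is known to be Hermitian,
`Re Tr (B E) = Re Tr (D C E)`, so each term of the Fisher information is at most
`Tr (C D C E)`, and summing over the POVM gives `Tr (C D C) = Tr (D C²) = Tr (B C)`.
Cauchy–Schwarz is an equality when `C E = c E`, so the rank-one eigenprojections of `C`
attain the bound.

`C` is Hermitian because `J_D` is injective: if `D X + X D = 0` then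
`Tr (Xᴴ D X) + Tr (X D Xᴴ) = 0`, both traces are nonnegative, and `Tr (X D Xᴴ) = 0`
forces `X = 0` since `D` is positive definite.
-/

namespace Matrix

variable {𝕜 : Type*} [RCLike 𝕜] {n ι : Type*} [Fintype n] [Fintype ι]

lemma re_trace_mul_mul_conjTranspose_sq_le {E : Matrix n n 𝕜} (hE : E.PosSemidef)
    (X Y : Matrix n n 𝕜) :
    RCLike.re (X * E * Yᴴ).trace ^ 2 ≤
      RCLike.re (X * E * Xᴴ).trace * RCLike.re (Y * E * Yᴴ).trace := by
  let := E.toMatrixSeminormedAddCommGroup hE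
  let := E.toMatrixInnerProductSpace hE
  calc RCLike.re (inner 𝕜 Y X) ^ 2 ≤ ‖inner 𝕜 Y X‖ * ‖inner 𝕜 X Y‖ := by
        rw [norm_inner_symm X Y, ← sq, ← sq_abs]
        gcongr
        exact RCLike.abs_re_le_norm _
    _ ≤ RCLike.re (inner 𝕜 Y Y) * RCLike.re (inner 𝕜 X X) := inner_mul_inner_self_le Y X
    _ = _ := mul_comm _ _

lemma PosDef.eq_zero_of_trace_mul_mul_conjTranspose_eq_zero {D X : Matrix n n 𝕜}
    (hD : D.PosDef) (h : (X * D * Xᴴ).trace = 0) : X = 0 := by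
  let := D.toMatrixNormedAddCommGroup hD
  let := D.toMatrixInnerProductSpace hD.posSemidef
  exact inner_self_eq_zero (𝕜 := 𝕜).mp h

lemma PosDef.eq_zero_of_mul_add_mul_eq_zero {D X : Matrix n n 𝕜} (hD : D.PosDef)
    (h : D * X + X * D = 0) : X = 0 := by
  have hsum : (Xᴴ * D * X).trace + (X * D * Xᴴ).trace = 0 := by
    rw [trace_mul_comm (X * D), ← trace_add, mul_assoc Xᴴ D X, ← mul_add, h, mul_zero,
      trace_zero]
  have h₁ := (hD.posSemidef.conjTranspose_mul_mul_same X).trace_nonneg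
  have h₂ := (hD.posSemidef.mul_mul_conjTranspose_same X).trace_nonneg
  exact hD.eq_zero_of_trace_mul_mul_conjTranspose_eq_zero
    ((add_eq_zero_iff_of_nonneg h₁ h₂).mp hsum).2

def jordanMul (D X : Matrix n n 𝕜) : Matrix n n 𝕜 := (1 / 2 : 𝕜) • (D * X + X * D)

lemma trace_jordanMul_mul (D C : Matrix n n 𝕜) :
    (jordanMul D C * C).trace = (D * C * C).trace := by
  rw [jordanMul, smul_mul, add_mul, trace_smul, trace_add, mul_assoc C, trace_mul_comm C,
    ← two_smul 𝕜, smul_smul]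
  norm_num

lemma PosDef.isHermitian_of_isHermitian_jordanMul {D C : Matrix n n 𝕜} (hD : D.PosDef)
    (hJ : (jordanMul D C).IsHermitian) : C.IsHermitian := by
  have hJ' : D * Cᴴ + Cᴴ * D = D * C + C * D := by
    have := hJ.eq
    simp only [jordanMul, conjTranspose_smul, conjTranspose_add, conjTranspose_mul,
      hD.isHermitian.eq] at this
    rw [add_comm]
    refine smul_right_injective _ (by norm_num : (1 / 2 : 𝕜) ≠ 0) ?_
    simpa using this
  have h : D * (Cᴴ - C) + (Cᴴ - C) * D = 0 := by
    rw [mul_sub, sub_mul, sub_add_sub_comm, hJ', sub_self]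
  exact sub_eq_zero.mp (hD.eq_zero_of_mul_add_mul_eq_zero h)

lemma re_trace_jordanMul_mul {D C E : Matrix n n 𝕜} (hD : D.IsHermitian) (hC : C.IsHermitian)
    (hE : E.IsHermitian) :
    RCLike.re (jordanMul D C * E).trace = RCLike.re (D * C * E).trace := by
  have h : (C * D * E).trace = star (D * C * E).trace := by
    rw [← trace_conjTranspose, conjTranspose_mul, conjTranspose_mul, hD.eq, hC.eq, hE.eq,
      trace_mul_comm E]
  rw [jordanMul, smul_mul, add_mul, trace_smul, trace_add, h, smul_eq_mul, RCLike.star_def,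
    RCLike.add_conj]
  simp

open scoped MatrixOrder in
lemma re_trace_mul_sq_div_le {D E : Matrix n n 𝕜} (hD : D.PosSemidef) (hE : E.PosSemidef)
    (C : Matrix n n 𝕜) :
    RCLike.re (D * C * E).trace ^ 2 / RCLike.re (D * E).trace ≤
      RCLike.re (Cᴴ * D * C * E).trace := by
  classical
  obtain ⟨S, rfl⟩ := CStarAlgebra.nonneg_iff_eq_star_mul_self.mp hD.nonneg
  rw [star_eq_conjTranspose]
  have hDCE : (Sᴴ * S * C * E).trace = (S * C * E * Sᴴ).trace := by
    rw [mul_assoc, mul_assoc, trace_mul_comm Sᴴ]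
    simp only [mul_assoc]
  have hDE : (Sᴴ * S * E).trace = (S * E * Sᴴ).trace := by
    rw [mul_assoc, trace_mul_comm Sᴴ]
  have hCDCE : (Cᴴ * (Sᴴ * S) * C * E).trace = (S * C * E * (S * C)ᴴ).trace := by
    rw [conjTranspose_mul, trace_mul_comm (S * C * E)]
    simp only [mul_assoc]
  rw [hDCE, hDE, hCDCE]
  refine div_le_of_le_mul₀ ?_ ?_ (re_trace_mul_mul_conjTranspose_sq_le hE (S * C) S)
  · exact (RCLike.nonneg_iff.mp (hE.mul_mul_conjTranspose_same S).trace_nonneg).1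
  · exact (RCLike.nonneg_iff.mp (hE.mul_mul_conjTranspose_same (S * C)).trace_nonneg).1

structure IsPOVM [DecidableEq n] (E : ι → Matrix n n 𝕜) : Prop where
  posSemidef : ∀ i, (E i).PosSemidef
  sum_eq_one : ∑ i, E i = 1

noncomputable def classicalFisherInfo (B D : Matrix n n 𝕜) (E : ι → Matrix n n 𝕜) : ℝ :=
  ∑ i, RCLike.re (B * E i).trace ^ 2 / RCLike.re (D * E i).trace

lemma classicalFisherInfo_jordanMul_le [DecidableEq n] {D C : Matrix n n 𝕜}
    (hD : D.PosSemidef) (hC : C.IsHermitian) {E : ι → Matrix n n 𝕜} (hE : IsPOVM E) :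
    classicalFisherInfo (jordanMul D C) D E ≤ RCLike.re (D * C * C).trace :=
  calc classicalFisherInfo (jordanMul D C) D E
      = ∑ i, RCLike.re (D * C * E i).trace ^ 2 / RCLike.re (D * E i).trace := by
        refine Finset.sum_congr rfl fun i _ => ?_
        rw [re_trace_jordanMul_mul hD.isHermitian hC (hE.posSemidef i).isHermitian]
    _ ≤ ∑ i, RCLike.re (Cᴴ * D * C * E i).trace :=
        Finset.sum_le_sum fun i _ => re_trace_mul_sq_div_le hD (hE.posSemidef i) C
    _ = RCLike.re (D * C * C).trace := by
        rw [← map_sum, ← trace_sum, ← Finset.mul_sum, hE.sum_eq_one, mul_one, hC.eq,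
          mul_assoc, trace_mul_comm C]

lemma classicalFisherInfo_jordanMul_of_mul_eq_smul [DecidableEq n] {D C : Matrix n n 𝕜}
    (hD : D.IsHermitian) (hC : C.IsHermitian) {E : ι → Matrix n n 𝕜} (hE : IsPOVM E)
    {c : ι → ℝ} (hCE : ∀ i, C * E i = c i • E i) :
    classicalFisherInfo (jordanMul D C) D E = RCLike.re (D * C * C).trace := by
  have hterm : ∀ i, RCLike.re (jordanMul D C * E i).trace ^ 2 / RCLike.re (D * E i).trace =
      RCLike.re (D * C * C * E i).trace := by
    intro i
    have h₁ : RCLike.re (jordanMul D C * E i).trace = c i * RCLike.re (D * E i).trace := by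
      rw [re_trace_jordanMul_mul hD hC (hE.posSemidef i).isHermitian, mul_assoc, hCE,
        Matrix.mul_smul, trace_smul, RCLike.smul_re]
    have h₂ : RCLike.re (D * C * C * E i).trace = c i ^ 2 * RCLike.re (D * E i).trace := by
      rw [mul_assoc, mul_assoc, hCE, Matrix.mul_smul, hCE, smul_smul, Matrix.mul_smul,
        trace_smul, RCLike.smul_re, sq]
    rw [h₁, h₂]
    rcases eq_or_ne (RCLike.re (D * E i).trace) 0 with h | h
    · simp [h]
    · field_simp
  rw [classicalFisherInfo, Finset.sum_congr rfl fun i _ => hterm i, ← map_sum, ← trace_sum,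
    ← Finset.mul_sum, hE.sum_eq_one, mul_one]

lemma IsHermitian.exists_isPOVM_mul_eq_smul [DecidableEq n] {C : Matrix n n 𝕜}
    (hC : C.IsHermitian) :
    ∃ E : n → Matrix n n 𝕜, IsPOVM E ∧ ∀ i, C * E i = hC.eigenvalues i • E i := by
  refine ⟨fun i => vecMulVec (hC.eigenvectorBasis i) (star (hC.eigenvectorBasis i)),
    ⟨fun i => posSemidef_vecMulVec_self_star _, ?_⟩, fun i => ?_⟩
  · ext a b
    have := congr_fun₂ (Unitary.coe_mul_star_self hC.eigenvectorUnitary) a b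
    simpa [mul_apply, vecMulVec_apply, sum_apply, star_apply] using this
  · rw [mul_vecMulVec, mulVec_eigenvectorBasis, smul_vecMulVec]

end Matrix

theorem stmt7_general {n : ℕ} (D : Matrix (Fin n) (Fin n) ℂ) (hD : D.PosDef)
    (B : Matrix (Fin n) (Fin n) ℂ) (hB : B.IsHermitian)
    (C : Matrix (Fin n) (Fin n) ℂ) (hC : (1 / 2 : ℂ) • (D * C + C * D) = B) :
    IsGreatest {x : ℝ | ∃ (k : ℕ) (E : Fin k → Matrix (Fin n) (Fin n) ℂ),
        (∀ i, (E i).PosSemidef) ∧ (∑ i, E i = 1) ∧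
        x = ∑ i, ((B * E i).trace.re) ^ 2 / ((D * E i).trace.re)}
      ((B * C).trace.re)
    ∧ (B * C).trace = (D * C * C).trace := by
  obtain rfl : jordanMul D C = B := hC
  have hCh : C.IsHermitian := hD.isHermitian_of_isHermitian_jordanMul hB
  obtain ⟨E, hE, hCE⟩ := hCh.exists_isPOVM_mul_eq_smul
  refine ⟨⟨⟨n, E, hE.posSemidef, hE.sum_eq_one, ?_⟩, ?_⟩, trace_jordanMul_mul D C⟩
  · rw [trace_jordanMul_mul]
    exact (classicalFisherInfo_jordanMul_of_mul_eq_smul hD.isHermitian hCh hE hCE).symm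
  · rintro _ ⟨k, E, hpsd, hsum, rfl⟩
    rw [trace_jordanMul_mul]
    exact classicalFisherInfo_jordanMul_le hD.posSemidef hCh ⟨hpsd, hsum⟩

/-- for a positive definite density matrix `D`, traceless Hermitian `B` and
`C = J_D⁻¹(B)` (i.e. `(DC + CD)/2 = B`), the supremum over all POVMs of the classical
Fisher information `Σᵢ (Tr B Eᵢ)²/(Tr D Eᵢ)` equals `Tr B J_D⁻¹(B) = Tr D C²`, and the
supremum is attained (e.g. by the spectral projections of `C`). -/
theorem stmt7 {n : ℕ} (D : Matrix (Fin n) (Fin n) ℂ) (hD : D.PosDef) (hDtr : D.trace = 1)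
    (B : Matrix (Fin n) (Fin n) ℂ) (hB : B.IsHermitian) (hBtr : B.trace = 0)
    (C : Matrix (Fin n) (Fin n) ℂ) (hC : (1 / 2 : ℂ) • (D * C + C * D) = B) :
    IsGreatest {x : ℝ | ∃ (k : ℕ) (E : Fin k → Matrix (Fin n) (Fin n) ℂ),
        (∀ i, (E i).PosSemidef) ∧ (∑ i, E i = 1) ∧
        x = ∑ i, ((B * E i).trace.re) ^ 2 / ((D * E i).trace.re)}
      ((B * C).trace.re)
    ∧ (B * C).trace = (D * C * C).trace :=
  stmt7_general D hD B hB C hC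
end

section
/- For any positive semidefinite matrix E, positive definite matrix D and self-adjoint matrix C, one has (Tr CDE)² ≤ (Tr E C D C)(Tr D E). -/
open Matrix
open scoped ComplexOrder

/-!
Write `E = Bᴴ * B`. For the semi-inner product `⟪x, y⟫ = Tr (y * D * xᴴ)` induced by the positive
semidefinite `D`, cyclicity of the trace gives `⟪B, B * C⟫ = Tr (C * D * E)`,
`⟪B, B⟫ = Tr (D * E)` and `⟪B * C, B * C⟫ = Tr (E * C * D * Cᴴ)`, so the inequality is
Cauchy–Schwarz.
-/

namespace Matrix.PosSemidef

variable {n 𝕜 : Type*} [Fintype n] [RCLike 𝕜]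

theorem norm_trace_mul_mul_conjTranspose_sq_le {M : Matrix n n 𝕜} (hM : M.PosSemidef)
    (x y : Matrix n n 𝕜) :
    ‖(y * M * xᴴ).trace‖ ^ 2 ≤
      RCLike.re (x * M * xᴴ).trace * RCLike.re (y * M * yᴴ).trace := by
  let _ := M.toMatrixSeminormedAddCommGroup hM
  let _ := M.toMatrixInnerProductSpace hM
  have h := inner_mul_inner_self_le (𝕜 := 𝕜) x y
  rw [norm_inner_symm y x, ← sq] at h
  exact h

open scoped MatrixOrder in
theorem norm_trace_mul_mul_sq_le [DecidableEq n] {D E : Matrix n n 𝕜} (hD : D.PosSemidef)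
    (hE : E.PosSemidef) (A : Matrix n n 𝕜) :
    ‖(A * D * E).trace‖ ^ 2 ≤
      RCLike.re (E * A * D * Aᴴ).trace * RCLike.re (D * E).trace := by
  obtain ⟨B, rfl⟩ := CStarAlgebra.nonneg_iff_eq_star_mul_self.mp hE.nonneg
  rw [star_eq_conjTranspose]
  have h := hD.norm_trace_mul_mul_conjTranspose_sq_le B (B * A)
  have h₁ : (B * A * D * Bᴴ).trace = (A * D * (Bᴴ * B)).trace := by
    rw [trace_mul_comm, mul_assoc B, ← mul_assoc, trace_mul_comm]
  have h₂ : (B * D * Bᴴ).trace = (D * (Bᴴ * B)).trace := by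
    rw [trace_mul_comm, ← mul_assoc, trace_mul_comm]
  have h₃ : (B * A * D * (B * A)ᴴ).trace = (Bᴴ * B * A * D * Aᴴ).trace := by
    rw [conjTranspose_mul, ← mul_assoc, trace_mul_comm]
    simp only [mul_assoc]
  rw [h₁, h₂, h₃] at h
  exact h.trans_eq (mul_comm _ _)

end Matrix.PosSemidef

/-- for positive semidefinite `E`, positive definite `D` and self-adjoint
`C`, one has `|Tr CDE|² ≤ (Tr E C D C)(Tr D E)` (Cauchy–Schwarz for the
Hilbert–Schmidt inner product). -/
theorem stmt8 {n : ℕ} (E D C : Matrix (Fin n) (Fin n) ℂ)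
    (hE : E.PosSemidef) (hD : D.PosDef) (hC : C.IsHermitian) :
    ‖(C * D * E).trace‖ ^ 2 ≤ (E * C * D * C).trace.re * (D * E).trace.re := by
  simpa only [hC.eq, RCLike.re_to_complex] using hD.posSemidef.norm_trace_mul_mul_sq_le hE C
end

section
/- Let D = Diag(λ₁,...,λₙ) be positive definite and X = X* ∈ M_n. Then the SLD Fisher information of the commutator tangent vector satisfies F_min(D; i[D,X]) = Σ_{ij} 2(λᵢ−λⱼ)²/(λᵢ+λⱼ) |X_{ij}|². -/
/-!
For diagonal `D`, the map `J_D` acts entrywise: `(J_D C)ᵢⱼ = (λᵢ + λⱼ)/2 · Cᵢⱼ`. Hence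
`J_D⁻¹(B)ᵢⱼ = 2 Bᵢⱼ/(λᵢ + λⱼ)` and `Tr B J_D⁻¹(B) = Σᵢⱼ 2 Bᵢⱼ Bⱼᵢ/(λᵢ + λⱼ)`. For
`B = i[D,X]` one has `Bᵢⱼ = i(λᵢ - λⱼ)Xᵢⱼ`, and `Xⱼᵢ = conj Xᵢⱼ` gives
`Bᵢⱼ Bⱼᵢ = (λᵢ - λⱼ)² |Xᵢⱼ|²`.
-/

open Matrix

namespace Matrix

variable {ι : Type*} [Fintype ι] [DecidableEq ι]

theorem diagonal_mul_add_mul_diagonal_apply {R : Type*} [CommSemiring R] (d : ι → R)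
    (C : Matrix ι ι R) (i j : ι) :
    (diagonal d * C + C * diagonal d) i j = (d i + d j) * C i j := by
  rw [add_apply, diagonal_mul, mul_diagonal]
  ring

theorem diagonal_mul_sub_mul_diagonal_apply {R : Type*} [CommRing R] (d : ι → R)
    (X : Matrix ι ι R) (i j : ι) :
    (diagonal d * X - X * diagonal d) i j = (d i - d j) * X i j := by
  rw [sub_apply, diagonal_mul, mul_diagonal]
  ring

section Field

variable {𝕜 : Type*} [Field 𝕜] [NeZero (2 : 𝕜)]

theorem apply_eq_of_half_smul_diagonal_anticommutator_eq {d : ι → 𝕜}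
    (hd : ∀ i j, d i + d j ≠ 0) {B C : Matrix ι ι 𝕜}
    (hC : (1 / 2 : 𝕜) • (diagonal d * C + C * diagonal d) = B) (i j : ι) :
    C i j = 2 * B i j / (d i + d j) := by
  rw [eq_div_iff (hd i j), ← hC, smul_apply, diagonal_mul_add_mul_diagonal_apply, smul_eq_mul]
  field_simp

theorem trace_mul_eq_sum_of_half_smul_diagonal_anticommutator_eq {d : ι → 𝕜}
    (hd : ∀ i j, d i + d j ≠ 0) {B C : Matrix ι ι 𝕜}
    (hC : (1 / 2 : 𝕜) • (diagonal d * C + C * diagonal d) = B) :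
    (B * C).trace = ∑ i, ∑ j, 2 * (B i j * B j i) / (d i + d j) := by
  simp only [trace, diag_apply, mul_apply, apply_eq_of_half_smul_diagonal_anticommutator_eq hd hC]
  refine Finset.sum_congr rfl fun i _ => Finset.sum_congr rfl fun j _ => ?_
  rw [add_comm (d j)]
  ring

end Field

theorem IsHermitian.apply_mul_apply_of_eq_I_smul_diagonal_commutator (lam : ι → ℝ)
    {X B : Matrix ι ι ℂ} (hX : X.IsHermitian)
    (hB : B = Complex.I • (diagonal (fun k => (lam k : ℂ)) * X - X * diagonal fun k => (lam k : ℂ)))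
    (i j : ι) :
    B i j * B j i = (((lam i - lam j) ^ 2 * ‖X i j‖ ^ 2 : ℝ) : ℂ) := by
  have hXji : X j i = star (X i j) := (hX.apply j i).symm
  simp only [hB, smul_apply, diagonal_mul_sub_mul_diagonal_apply, smul_eq_mul, hXji]
  have hnorm : X i j * star (X i j) = ((‖X i j‖ ^ 2 : ℝ) : ℂ) := by
    rw [Complex.star_def, Complex.mul_conj, Complex.normSq_eq_norm_sq]
  push_cast at hnorm ⊢
  linear_combination ((lam i : ℂ) - lam j) ^ 2 * hnorm -
    ((lam i : ℂ) - lam j) ^ 2 * X i j * star (X i j) * Complex.I_sq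

end Matrix

/-- for `D = Diag(λ)` positive definite and `X` self-adjoint, the SLD
Fisher information of the tangent vector `B = i[D,X]` is
`F_min(D; i[D,X]) = Σ_{ij} 2 (λᵢ-λⱼ)²/(λᵢ+λⱼ) |X_{ij}|²`, where `F_min(D;B) = Tr B C`
with `C` the solution of `(DC + CD)/2 = B`. -/
theorem stmt10 {n : ℕ} (lam : Fin n → ℝ) (hlam : ∀ i, 0 < lam i)
    (D : Matrix (Fin n) (Fin n) ℂ) (hD : D = Matrix.diagonal fun i => (lam i : ℂ))
    (X : Matrix (Fin n) (Fin n) ℂ) (hX : X.IsHermitian)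
    (B : Matrix (Fin n) (Fin n) ℂ) (hB : B = Complex.I • (D * X - X * D))
    (C : Matrix (Fin n) (Fin n) ℂ) (hC : (1 / 2 : ℂ) • (D * C + C * D) = B) :
    (B * C).trace =
      ((∑ i, ∑ j, 2 * (lam i - lam j) ^ 2 / (lam i + lam j) * ‖X i j‖ ^ 2 : ℝ) : ℂ) := by
  subst hD
  have hsum : ∀ i j, (lam i : ℂ) + lam j ≠ 0 := fun i j => by
    exact_mod_cast (add_pos (hlam i) (hlam j)).ne'
  rw [trace_mul_eq_sum_of_half_smul_diagonal_anticommutator_eq hsum hC]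
  push_cast
  refine Finset.sum_congr rfl fun i _ => Finset.sum_congr rfl fun j _ => ?_
  rw [hX.apply_mul_apply_of_eq_I_smul_diagonal_commutator lam hB i j]
  push_cast
  ring
end

section
/- Let D be a positive definite density matrix and f a standard operator monotone function. Then the monotone-metric (generalized) Cramér–Rao inequality holds: if A = (A₁,...,A_m) are self-adjoint matrices and L_i = (J_D^f)⁻¹(∂_i D_θ) satisfy Tr A_i J_D^f(L_j) = δ_{ij}, then the m×m matrices C(D)_{ij} = Tr A_i J_D^f(A_j) and J(D)_{ij} = Tr L_i J_D^f(L_j) satisfy C(D) ≥ J(D)⁻¹ (as positive semidefinite matrices), provided J(D) is invertible. -/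
open Matrix
open scoped ComplexOrder

/-- `f : (0,∞) → (0,∞)` is operator monotone. -/
def OperatorMonotoneOn (f : ℝ → ℝ) : Prop :=
  ∀ (n : ℕ) (A B : Matrix (Fin n) (Fin n) ℂ) (hA : A.PosDef) (hB : B.PosDef),
    (B - A).PosSemidef →
      (hermApply f B hB.1 - hermApply f A hA.1).PosSemidef

/-- The map `J_D^f` in the eigenbasis of a positive definite `D`. -/
noncomputable def Jmap {n : ℕ} (f : ℝ → ℝ) (D : Matrix (Fin n) (Fin n) ℂ)
    (hD : D.IsHermitian) (B : Matrix (Fin n) (Fin n) ℂ) : Matrix (Fin n) (Fin n) ℂ :=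
  let U : Matrix (Fin n) (Fin n) ℂ := hD.eigenvectorUnitary
  U * (Matrix.of fun i j =>
      ((hD.eigenvalues j * f (hD.eigenvalues i / hD.eigenvalues j) : ℝ) : ℂ) *
        (star U * B * U) i j) * star U

/-!
In the eigenbasis `U` of `D`, with `X' = U⋆ X U`, a self-adjoint `X` satisfies
`Tr X J_D^f(Y) = ∑ᵢⱼ cᵢⱼ conj X'ᵢⱼ Y'ᵢⱼ` with weights `cᵢⱼ = λⱼ f(λᵢ/λⱼ) > 0`. Hence
`⟨X, Y⟩_D = Re Tr X J_D^f(Y)` is the real inner product of the vectors `(√cᵢⱼ X'ᵢⱼ)`, and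
`C(D)`, `J(D)` are Gram matrices. By unbiasedness the Gram matrix of the joint family `(A, L)` is
the block matrix `[[C(D), I], [I, J(D)]]`; it is positive semidefinite, and as `J(D)` is positive
definite so is its Schur complement `C(D) - J(D)⁻¹`.
-/

open scoped InnerProductSpace ComplexConjugate

theorem Matrix.posSemidef_gram_sub_inv_gram {ι E : Type*} [Fintype ι] [DecidableEq ι]
    [SeminormedAddCommGroup E] [InnerProductSpace ℝ E] {a l : ι → E}
    (hal : ∀ i j, ⟪a i, l j⟫_ℝ = if i = j then 1 else 0) (hl : IsUnit (gram ℝ l).det) :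
    (gram ℝ a - (gram ℝ l)⁻¹).PosSemidef := by
  have hblock : gram ℝ (Sum.elim a l) = fromBlocks (gram ℝ a) 1 1 (gram ℝ l) := by
    ext (i | i) (j | j)
    · rfl
    · simp [hal, one_apply]
    · simp [real_inner_comm, hal, one_apply, eq_comm]
    · rfl
  have hpd : (gram ℝ l).PosDef :=
    (posSemidef_gram ℝ l).posDef_iff_isUnit.mpr ((isUnit_iff_isUnit_det _).mpr hl)
  have := hpd.isUnit.invertible
  simpa using (PosDef.fromBlocks₂₂ (gram ℝ a) 1 hpd).mp
    (by simpa [← hblock] using posSemidef_gram ℝ (Sum.elim a l))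

namespace Jmap

variable {n : ℕ} {f : ℝ → ℝ} {D : Matrix (Fin n) (Fin n) ℂ}

variable (f) in
noncomputable def weight (hD : D.IsHermitian) (p : Fin n × Fin n) : ℝ :=
  hD.eigenvalues p.2 * f (hD.eigenvalues p.1 / hD.eigenvalues p.2)

noncomputable def eigenCoords (hD : D.IsHermitian) (X : Matrix (Fin n) (Fin n) ℂ)
    (p : Fin n × Fin n) : ℂ :=
  (star (hD.eigenvectorUnitary : Matrix (Fin n) (Fin n) ℂ) * X * hD.eigenvectorUnitary) p.1 p.2

variable (f) in
noncomputable def weightedCoords (hD : D.IsHermitian) (X : Matrix (Fin n) (Fin n) ℂ) :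
    EuclideanSpace ℂ (Fin n × Fin n) :=
  WithLp.toLp 2 fun p => (√(weight f hD p) : ℂ) * eigenCoords hD X p

lemma weight_nonneg (hf : ∀ x > 0, 0 < f x) (hD : D.PosDef) (p : Fin n × Fin n) :
    0 ≤ weight f hD.1 p :=
  have hev := hD.eigenvalues_pos
  (mul_pos (hev p.2) (hf _ (div_pos (hev p.1) (hev p.2)))).le

variable {hD : D.IsHermitian}

lemma conj_eigenCoords {X : Matrix (Fin n) (Fin n) ℂ} (hX : X.IsHermitian) (p : Fin n × Fin n) :
    conj (eigenCoords hD X p) = eigenCoords hD X p.swap := by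
  have hX' :=
    isHermitian_conjTranspose_mul_mul (hD.eigenvectorUnitary : Matrix (Fin n) (Fin n) ℂ) hX
  simpa [eigenCoords, star_eq_conjTranspose] using hX'.apply p.2 p.1

lemma trace_mul_Jmap {X : Matrix (Fin n) (Fin n) ℂ} (hX : X.IsHermitian)
    (Y : Matrix (Fin n) (Fin n) ℂ) :
    (X * Jmap f D hD Y).trace =
      ∑ p, (weight f hD p : ℂ) * conj (eigenCoords hD X p) * eigenCoords hD Y p := by
  set U : Matrix (Fin n) (Fin n) ℂ := (hD.eigenvectorUnitary : Matrix (Fin n) (Fin n) ℂ)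
  have hJ : Jmap f D hD Y =
      U * of (fun i j => (weight f hD (i, j) : ℂ) * eigenCoords hD Y (i, j)) * star U := rfl
  rw [hJ, ← Matrix.mul_assoc, ← Matrix.mul_assoc, trace_mul_cycle, ← Matrix.mul_assoc,
    Fintype.sum_prod_type, Finset.sum_comm]
  simp only [trace, diag_apply, mul_apply (M := star U * X * U), of_apply]
  refine Finset.sum_congr rfl fun i _ => Finset.sum_congr rfl fun j _ => ?_
  rw [conj_eigenCoords hX (j, i)]
  simp only [eigenCoords, Prod.swap_prod_mk, U]
  ring

lemma re_trace_mul_Jmap_eq_inner (hw : ∀ p, 0 ≤ weight f hD p) {X : Matrix (Fin n) (Fin n) ℂ}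
    (hX : X.IsHermitian) (Y : Matrix (Fin n) (Fin n) ℂ) :
    (X * Jmap f D hD Y).trace.re = ⟪weightedCoords f hD X, weightedCoords f hD Y⟫_ℝ := by
  rw [trace_mul_Jmap hX, PiLp.inner_apply, Complex.re_sum]
  refine Finset.sum_congr rfl fun p _ => ?_
  have hsq : (√(weight f hD p) : ℂ) * √(weight f hD p) = weight f hD p := by
    exact_mod_cast Real.mul_self_sqrt (hw p)
  simp only [weightedCoords, PiLp.toLp_apply, Complex.inner, map_mul, Complex.conj_ofReal]
  congr 1
  linear_combination -(conj (eigenCoords hD X p) * eigenCoords hD Y p) * hsq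

end Jmap

open Jmap in
theorem stmt14_general {n m : ℕ} (f : ℝ → ℝ) (hfpos : ∀ x > 0, 0 < f x)
    (D : Matrix (Fin n) (Fin n) ℂ) (hD : D.PosDef)
    (A L : Fin m → Matrix (Fin n) (Fin n) ℂ)
    (hA : ∀ i, (A i).IsHermitian) (hL : ∀ i, (L i).IsHermitian)
    (hunbiased : ∀ i j, (A i * Jmap f D hD.1 (L j)).trace = if i = j then 1 else 0)
    (CD JD : Matrix (Fin m) (Fin m) ℝ)
    (hCD : ∀ i j, CD i j = (A i * Jmap f D hD.1 (A j)).trace.re)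
    (hJD : ∀ i j, JD i j = (L i * Jmap f D hD.1 (L j)).trace.re)
    (hJinv : IsUnit JD.det) :
    (CD - JD⁻¹).PosSemidef := by
  have hw := weight_nonneg hfpos hD
  obtain rfl : CD = gram ℝ (weightedCoords f hD.1 ∘ A) :=
    ext fun i j => (hCD i j).trans (re_trace_mul_Jmap_eq_inner hw (hA i) _)
  obtain rfl : JD = gram ℝ (weightedCoords f hD.1 ∘ L) :=
    ext fun i j => (hJD i j).trans (re_trace_mul_Jmap_eq_inner hw (hL i) _)
  refine posSemidef_gram_sub_inv_gram (fun i j => ?_) hJinv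
  simp [← re_trace_mul_Jmap_eq_inner hw (hA i), hunbiased, apply_ite]

/-- generalized (monotone-metric) Cramér–Rao inequality:  if the
self-adjoint estimators `A₁,…,A_m` and the logarithmic derivatives `L₁,…,L_m` satisfy
the local unbiasedness conditions `Tr Aᵢ J_D^f(Lⱼ) = δᵢⱼ`, then the covariance matrix
`C(D)ᵢⱼ = Tr Aᵢ J_D^f(Aⱼ)` and the Fisher information matrix
`J(D)ᵢⱼ = Tr Lᵢ J_D^f(Lⱼ)` satisfy `C(D) ≥ J(D)⁻¹`, provided `J(D)` is invertible. -/
theorem stmt14 {n m : ℕ} (f : ℝ → ℝ) (hfpos : ∀ x > 0, 0 < f x)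
    (hmono : OperatorMonotoneOn f) (hf1 : f 1 = 1)
    (hsymm : ∀ x > (0 : ℝ), x * f (1 / x) = f x)
    (D : Matrix (Fin n) (Fin n) ℂ) (hD : D.PosDef) (hDtr : D.trace = 1)
    (A L : Fin m → Matrix (Fin n) (Fin n) ℂ)
    (hA : ∀ i, (A i).IsHermitian) (hL : ∀ i, (L i).IsHermitian)
    (hunbiased : ∀ i j, (A i * Jmap f D hD.1 (L j)).trace = if i = j then 1 else 0)
    (CD JD : Matrix (Fin m) (Fin m) ℝ)
    (hCD : ∀ i j, CD i j = (A i * Jmap f D hD.1 (A j)).trace.re)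
    (hJD : ∀ i j, JD i j = (L i * Jmap f D hD.1 (L j)).trace.re)
    (hJinv : IsUnit JD.det) :
    (CD - JD⁻¹).PosSemidef :=
  stmt14_general f hfpos D hD A L hA hL hunbiased CD JD hCD hJD hJinv
end
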